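/- Let X and Y be Polish spaces and let A, B be analytic subsets of X × Y. If A cannot be separated from B by a set of the form C × D with C, D Borel, then (Π₀[A] × Π₁[A]) ∩ B ≠ ∅; in particular A cannot be separated from B by any rectangle C × D whatsoever. -/

import Mathlib

/-!
Lusin's separation theorem, applied one coordinate at a time. If `Π₀[A] × Π₁[A]` misses `B`,
then `Π₀[A]` is disjoint from the analytic set `Π₀[B ∩ (X × Π₁[A])]`, so a Borel set `C ⊇ Π₀[A]`
avoids it; then `Π₁[A]` is disjoint from the analytic set `Π₁[B ∩ (C × Y)]`, and a Borel set
`D ⊇ Π₁[A]` avoiding it makes `C × D` a Borel rectangle separating `A` from `B`.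
-/

open MeasureTheory Set

theorem MeasureTheory.AnalyticSet.inter {α : Type*} [TopologicalSpace α] [T2Space α]
    {s t : Set α} (hs : AnalyticSet s) (ht : AnalyticSet t) : AnalyticSet (s ∩ t) := by
  rw [inter_eq_iInter]
  exact AnalyticSet.iInter (by rintro (_ | _) <;> assumption)

section RectangleSeparation

variable {X Y : Type*} [TopologicalSpace X] [PolishSpace X] [TopologicalSpace Y] [PolishSpace Y]

theorem exists_measurableSet_superset_disjoint_prod_left [MeasurableSpace X]
    [OpensMeasurableSpace X] {s : Set X} {t : Set Y} {B : Set (X × Y)} (hs : AnalyticSet s)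
    (ht : AnalyticSet t) (hB : AnalyticSet B) (h : Disjoint (s ×ˢ t) B) :
    ∃ C, MeasurableSet C ∧ s ⊆ C ∧ Disjoint (C ×ˢ t) B := by
  have hBt : AnalyticSet (Prod.fst '' (B ∩ Prod.snd ⁻¹' t)) :=
    (hB.inter (ht.preimage continuous_snd)).image_of_continuous continuous_fst
  have hdisj : Disjoint s (Prod.fst '' (B ∩ Prod.snd ⁻¹' t)) := by
    rw [disjoint_left]
    rintro x hx ⟨⟨x, y⟩, ⟨hxyB, hy⟩, rfl⟩
    exact disjoint_left.1 h ⟨hx, hy⟩ hxyB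
  obtain ⟨C, hsC, hCB, hC⟩ := hs.measurablySeparable hBt hdisj
  refine ⟨C, hC, hsC, disjoint_left.2 ?_⟩
  rintro ⟨x, y⟩ ⟨hx, hy⟩ hxyB
  exact disjoint_left.1 hCB ⟨(x, y), ⟨hxyB, hy⟩, rfl⟩ hx

theorem exists_measurableSet_superset_disjoint_prod_right [MeasurableSpace Y]
    [OpensMeasurableSpace Y] {s : Set X} {t : Set Y} {B : Set (X × Y)} (hs : AnalyticSet s)
    (ht : AnalyticSet t) (hB : AnalyticSet B) (h : Disjoint (s ×ˢ t) B) :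
    ∃ D, MeasurableSet D ∧ t ⊆ D ∧ Disjoint (s ×ˢ D) B := by
  have swap_disjoint {u : Set X} {v : Set Y} :
      Disjoint (v ×ˢ u) (Prod.swap ⁻¹' B) ↔ Disjoint (u ×ˢ v) B := by
    rw [← preimage_swap_prod, disjoint_preimage_iff Prod.swap_surjective]
  have hB' : AnalyticSet (Prod.swap ⁻¹' B) := hB.preimage continuous_swap
  obtain ⟨D, hD, htD, hDB⟩ :=
    exists_measurableSet_superset_disjoint_prod_left ht hs hB' (swap_disjoint.2 h)
  exact ⟨D, hD, htD, swap_disjoint.1 hDB⟩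

theorem exists_measurableSet_prod_superset_disjoint [MeasurableSpace X] [BorelSpace X]
    [MeasurableSpace Y] [OpensMeasurableSpace Y] {s : Set X} {t : Set Y} {B : Set (X × Y)}
    (hs : AnalyticSet s) (ht : AnalyticSet t) (hB : AnalyticSet B) (h : Disjoint (s ×ˢ t) B) :
    ∃ C D, MeasurableSet C ∧ MeasurableSet D ∧ s ×ˢ t ⊆ C ×ˢ D ∧ Disjoint (C ×ˢ D) B := by
  obtain ⟨C, hC, hsC, hCB⟩ := exists_measurableSet_superset_disjoint_prod_left hs ht hB h
  obtain ⟨D, hD, htD, hCDB⟩ :=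
    exists_measurableSet_superset_disjoint_prod_right hC.analyticSet ht hB hCB
  exact ⟨C, D, hC, hD, prod_mono hsC htD, hCDB⟩

end RectangleSeparation

/-- If analytic sets `A, B` in a product of Polish spaces cannot be separated by a Borel
rectangle, then the product of the projections of `A` meets `B`; in particular `A` cannot be
separated from `B` by any rectangle whatsoever. -/
theorem stmt1 {X Y : Type*}
    [TopologicalSpace X] [PolishSpace X] [MeasurableSpace X] [BorelSpace X]
    [TopologicalSpace Y] [PolishSpace Y] [MeasurableSpace Y] [BorelSpace Y]
    (A B : Set (X × Y)) (hA : AnalyticSet A) (hB : AnalyticSet B)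
    (h : ¬ ∃ (C : Set X) (D : Set Y), MeasurableSet C ∧ MeasurableSet D ∧
      A ⊆ C ×ˢ D ∧ (C ×ˢ D) ∩ B = ∅) :
    (((Prod.fst '' A) ×ˢ (Prod.snd '' A)) ∩ B ≠ ∅) ∧
      ¬ ∃ (C : Set X) (D : Set Y), A ⊆ C ×ˢ D ∧ (C ×ˢ D) ∩ B = ∅ := by
  have projections_meet : ((Prod.fst '' A) ×ˢ (Prod.snd '' A)) ∩ B ≠ ∅ := by
    intro hempty
    obtain ⟨C, D, hC, hD, hAD, hCDB⟩ := exists_measurableSet_prod_superset_disjoint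
      (hA.image_of_continuous continuous_fst) (hA.image_of_continuous continuous_snd) hB
      (disjoint_iff_inter_eq_empty.2 hempty)
    exact h ⟨C, D, hC, hD, subset_prod.trans hAD, disjoint_iff_inter_eq_empty.1 hCDB⟩
  refine ⟨projections_meet, ?_⟩
  rintro ⟨C, D, hACD, hCDB⟩
  have hproj : (Prod.fst '' A) ×ˢ (Prod.snd '' A) ⊆ C ×ˢ D :=
    prod_mono (image_subset_iff.2 fun _ hp => (hACD hp).1)
      (image_subset_iff.2 fun _ hp => (hACD hp).2)
  exact projections_meet (subset_empty_iff.1 (hCDB ▸ inter_subset_inter_left B hproj))
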